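/- Let G be a group with a convergence group action on a compact metrizable space M with at least three points. Then a conical limit point of G cannot be a parabolic point of G, i.e. no point z ∈ M that is a conical limit point of G is fixed by a parabolic subgroup of G. -/

import Mathlib

open Pointwise Filter Topology Set

section ConvergenceGroups

variable (G M : Type*) [Group G] [TopologicalSpace M] [MulAction G M]

/-- A convergence group action: the action is by homeomorphisms (each element acts
continuously, hence as a homeomorphism since the action is by a group), and the induced
diagonal action on the space of distinct triples of points of `M` is properly
discontinuous. -/
def IsConvergenceAction : Prop :=
  (∀ g : G, Continuous fun x : M => g • x) ∧
    ∀ K L : Set (M × M × M), IsCompact K → IsCompact L →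
      (∀ t ∈ K ∪ L, t.1 ≠ t.2.1 ∧ t.1 ≠ t.2.2 ∧ t.2.1 ≠ t.2.2) →
      {g : G | ((g • K) ∩ L).Nonempty}.Finite

/-- The limit set of a subgroup `H ≤ G`: the set of accumulation points in `M` of
the `H`-orbits of points of `M`. -/
def limitSet (H : Subgroup G) : Set M :=
  {x : M | ∃ m : M, x ∈ closure (((fun h : G => h • m) '' (H : Set G)) \ {x})}

/-- `z` is a conical limit point of the subgroup `H`. -/
def IsConicalLimitPoint (H : Subgroup G) (z : M) : Prop :=
  ∃ (h : ℕ → G) (a b : M), (∀ n, h n ∈ H) ∧ a ≠ b ∧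
    Tendsto (fun n => h n • z) atTop (nhds a) ∧
    ∀ q : M, q ≠ z → Tendsto (fun n => h n • q) atTop (nhds b)

/-- `g` is loxodromic: it has infinite order and fixes exactly two points of `M`. -/
def IsLoxodromic (g : G) : Prop :=
  ¬ IsOfFinOrder g ∧ {x : M | g • x = x}.encard = 2

/-- `p` is a bounded parabolic point of the subgroup `H`: its stabilizer in `H` is an
infinite subgroup containing no loxodromic element, which acts cocompactly on
`Λ(H) \ {p}`. -/
def IsBoundedParabolicPoint (H : Subgroup G) (p : M) : Prop :=
  ((H ⊓ MulAction.stabilizer G p : Subgroup G) : Set G).Infinite ∧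
  (∀ g ∈ H ⊓ MulAction.stabilizer G p, ¬ IsLoxodromic G M g) ∧
  ∃ C : Set M, IsCompact C ∧ C ⊆ limitSet G M H \ {p} ∧
    limitSet G M H \ {p} ⊆ ⋃ g ∈ (H ⊓ MulAction.stabilizer G p : Subgroup G), g • C

/-- `H` is dynamically quasiconvex: for every pair of disjoint closed subsets `K, L` of
`M`, the set of cosets `gH` with `gΛ(H)` meeting both `K` and `L` is finite. -/
def DynamicallyQuasiconvex (H : Subgroup G) : Prop :=
  ∀ K L : Set M, IsClosed K → IsClosed L → Disjoint K L →
    ((fun g : G => (g : G ⧸ H)) ''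
      {g : G | ((g • limitSet G M H) ∩ K).Nonempty ∧
               ((g • limitSet G M H) ∩ L).Nonempty}).Finite

end ConvergenceGroups

/-!
Properness on distinct triples gives the convergence property: along an ultrafilter, a family
`k j → ∞` in `G` has an attracting point `u` and a repelling point `v`, with the roles swapped
for `(k j)⁻¹`. When `u ≠ v`, a ping-pong argument shows that `k j` is eventually loxodromic.

Let `g n • z → a` and `g n • q → b` for `q ≠ z`, and let an infinite `P` fix `z`. The conjugates
`g n * r * (g n)⁻¹` (`r ∈ P`) fix `g n • z → a` and send `g n • w → b` to `g n • r • w`, which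
also tends to `b` as `n → ∞`. Choosing the pairs `(r, n)` so that the conjugates tend to
infinity, two asymptotically fixed points with distinct limits force `u ≠ v`; so some conjugate,
hence some `r ∈ P`, is loxodromic. A finite `M` with three points has no conical limit points.
-/

section ConicalLimitPoints

variable {G M ι : Type*} [Group G] [MulAction G M]

theorem mapsTo_pow_succ_smul {κ : G} {U V : Set M} (hUV : Disjoint U V)
    (hκ : MapsTo (fun x => κ • x) Vᶜ U) (n : ℕ) : MapsTo (fun x => κ ^ (n + 1) • x) Vᶜ U := by
  rw [← smul_iterate, Function.iterate_succ']
  exact hκ.comp ((hκ.mono_right hUV.subset_compl_right).iterate n)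

theorem IsLoxodromic.of_conj {g r : G} (h : IsLoxodromic G M (g * r * g⁻¹)) :
    IsLoxodromic G M r := by
  refine ⟨fun hr => h.1 ((isConj_iff.2 ⟨g, rfl⟩).isOfFinOrder hr), ?_⟩
  have hfix : {x : M | (g * r * g⁻¹) • x = x} = g • {x | r • x = x} := by
    ext x
    simp only [mem_ofPred_eq, mem_smul_set_iff_inv_smul_mem, mul_smul, smul_eq_iff_eq_inv_smul g,
      eq_comm]
  rw [← h.2, hfix, encard_smul_set]

variable (M) in
def distinctTriples : Set (M × M × M) :=
  {t | t.1 ≠ t.2.1 ∧ t.1 ≠ t.2.2 ∧ t.2.1 ≠ t.2.2}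

variable [TopologicalSpace M]

theorem isOpen_distinctTriples [T2Space M] : IsOpen (distinctTriples M) :=
  (isOpen_ne_fun continuous_fst continuous_snd.fst).inter
    ((isOpen_ne_fun continuous_fst continuous_snd.snd).inter
      (isOpen_ne_fun continuous_snd.fst continuous_snd.snd))

variable (G M) in
def IsProperOnDistinctTriples : Prop :=
  ∀ K L : Set (M × M × M), IsCompact K → IsCompact L → (∀ t ∈ K ∪ L, t ∈ distinctTriples M) →
    {g : G | ((g • K) ∩ L).Nonempty}.Finite

/-- `u` is the attracting and `v` the repelling point of the family `k` along `l`. -/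
def IsCollapsing (l : Filter ι) (k : ι → G) (u v : M) : Prop :=
  ∀ (y : ι → M) (w : M), w ≠ v → Tendsto y l (𝓝 w) → Tendsto (fun j => k j • y j) l (𝓝 u)

theorem IsConvergenceAction.isProperOnDistinctTriples (hG : IsConvergenceAction G M) :
    IsProperOnDistinctTriples G M :=
  hG.2

theorem Ultrafilter.exists_tendsto_of_compactSpace [CompactSpace M] (𝒰 : Ultrafilter ι)
    (y : ι → M) : ∃ x, Tendsto y 𝒰 (𝓝 x) :=
  ⟨(𝒰.map y).lim, Ultrafilter.le_nhds_lim _⟩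

theorem IsProperOnDistinctTriples.not_tendsto_smul [CompactSpace M] [T2Space M]
    (hG : IsProperOnDistinctTriples G M) {l : Filter ι} [l.NeBot] {k : ι → G}
    (hk : Tendsto k l cofinite) {t : ι → M × M × M} {τ σ : M × M × M}
    (hτ : τ ∈ distinctTriples M) (hσ : σ ∈ distinctTriples M) (ht : Tendsto t l (𝓝 τ)) :
    ¬ Tendsto (fun j => k j • t j) l (𝓝 σ) := by
  intro hkt
  obtain ⟨K, hK, hKc, hKd⟩ := exists_mem_nhds_isClosed_subset (isOpen_distinctTriples.mem_nhds hτ)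
  obtain ⟨L, hL, hLc, hLd⟩ := exists_mem_nhds_isClosed_subset (isOpen_distinctTriples.mem_nhds hσ)
  have hfin := hG K L hKc.isCompact hLc.isCompact fun t ht => ht.elim (@hKd t) (@hLd t)
  obtain ⟨j, hjK, hjL, hj⟩ := ((ht.eventually_mem hK).and ((hkt.eventually_mem hL).and
    (hk.eventually_mem hfin.compl_mem_cofinite))).exists
  exact hj ⟨_, smul_mem_smul_set hjK, hjL⟩

section ConvergenceProperty

variable [CompactSpace M] [T2Space M] {𝒰 : Ultrafilter ι} {k : ι → G}

theorem IsProperOnDistinctTriples.eq_or_eq_or_eq_of_tendsto_smul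
    (hG : IsProperOnDistinctTriples G M) (hk : Tendsto k 𝒰 cofinite) {y₁ y₂ y₃ c₁ c₂ c₃ : M}
    (h₁ : Tendsto (fun j => k j • y₁) 𝒰 (𝓝 c₁)) (h₂ : Tendsto (fun j => k j • y₂) 𝒰 (𝓝 c₂))
    (h₃ : Tendsto (fun j => k j • y₃) 𝒰 (𝓝 c₃)) : c₁ = c₂ ∨ c₁ = c₃ ∨ c₂ = c₃ := by
  by_contra! hc
  have hy : (y₁, y₂, y₃) ∈ distinctTriples M :=
    ⟨fun h : y₁ = y₂ => hc.1 (tendsto_nhds_unique h₁ (by rwa [h])),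
      fun h : y₁ = y₃ => hc.2.1 (tendsto_nhds_unique h₁ (by rwa [h])),
      fun h : y₂ = y₃ => hc.2.2 (tendsto_nhds_unique h₂ (by rwa [h]))⟩
  exact hG.not_tendsto_smul hk hy hc tendsto_const_nhds (h₁.prodMk_nhds (h₂.prodMk_nhds h₃))

theorem IsProperOnDistinctTriples.eq_of_tendsto_smul_of_ne [Infinite M]
    (hG : IsProperOnDistinctTriples G M) (hk : Tendsto k 𝒰 cofinite) {y₁ y₂ y₃ y₄ c c' : M}
    (h₁₂ : y₁ ≠ y₂) (h₃₄ : y₃ ≠ y₄)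
    (h₁ : Tendsto (fun j => k j • y₁) 𝒰 (𝓝 c)) (h₂ : Tendsto (fun j => k j • y₂) 𝒰 (𝓝 c))
    (h₃ : Tendsto (fun j => k j • y₃) 𝒰 (𝓝 c')) (h₄ : Tendsto (fun j => k j • y₄) 𝒰 (𝓝 c')) :
    c = c' := by
  classical
  by_contra hcc'
  obtain ⟨γ, hγ⟩ := Infinite.exists_notMem_finset {c, c'}
  simp only [Finset.mem_insert, Finset.mem_singleton, not_or] at hγ
  obtain ⟨ω, hω⟩ := 𝒰.exists_tendsto_of_compactSpace fun j => (k j)⁻¹ • γ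
  obtain ⟨ya, hya, hyaω⟩ : ∃ ya, Tendsto (fun j => k j • ya) 𝒰 (𝓝 c) ∧ ya ≠ ω := by
    rcases eq_or_ne y₁ ω with rfl | h
    exacts [⟨y₂, h₂, h₁₂.symm⟩, ⟨y₁, h₁, h⟩]
  obtain ⟨yb, hyb, hybω⟩ : ∃ yb, Tendsto (fun j => k j • yb) 𝒰 (𝓝 c') ∧ yb ≠ ω := by
    rcases eq_or_ne y₃ ω with rfl | h
    exacts [⟨y₄, h₄, h₃₄.symm⟩, ⟨y₃, h₃, h⟩]
  have hab : ya ≠ yb := by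
    rintro rfl
    exact hcc' (tendsto_nhds_unique hya hyb)
  refine hG.not_tendsto_smul hk (t := fun j => (ya, yb, (k j)⁻¹ • γ)) (σ := (c, c', γ))
    ⟨hab, hyaω, hybω⟩ ⟨hcc', Ne.symm hγ.1, Ne.symm hγ.2⟩
    (tendsto_const_nhds.prodMk_nhds (tendsto_const_nhds.prodMk_nhds hω)) ?_
  simp only [Prod.smul_mk, smul_inv_smul]
  exact hya.prodMk_nhds (hyb.prodMk_nhds tendsto_const_nhds)

theorem IsProperOnDistinctTriples.exists_tendsto_smul_of_ne [Infinite M]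
    (hG : IsProperOnDistinctTriples G M) (hk : Tendsto k 𝒰 cofinite) :
    ∃ c e : M, ∀ y, y ≠ e → Tendsto (fun j => k j • y) 𝒰 (𝓝 c) := by
  choose F hF using fun y : M => 𝒰.exists_tendsto_of_compactSpace fun j => k j • y
  obtain ⟨y₀⟩ := Infinite.nonempty M
  by_cases hconst : ∀ y, F y = F y₀
  · exact ⟨F y₀, y₀, fun y _ => hconst y ▸ hF y⟩
  push Not at hconst
  obtain ⟨y₁, hy₁⟩ := hconst
  have htwo : ∀ y, F y = F y₀ ∨ F y = F y₁ := fun y => by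
    rcases hG.eq_or_eq_or_eq_of_tendsto_smul hk (hF y) (hF y₀) (hF y₁) with h | h | h
    exacts [.inl h, .inr h, (hy₁ h.symm).elim]
  by_cases hpair : ∃ y, y ≠ y₀ ∧ F y = F y₀
  · obtain ⟨y₀', hne, heq⟩ := hpair
    refine ⟨F y₀, y₁, fun y hy => (htwo y).elim (fun h => h ▸ hF y) fun h => ?_⟩
    exact (hy₁ (hG.eq_of_tendsto_smul_of_ne hk hne hy (heq ▸ hF y₀') (hF y₀)
      (h ▸ hF y) (hF y₁)).symm).elim
  · push Not at hpair
    exact ⟨F y₁, y₀, fun y hy => (htwo y).resolve_left (hpair y hy) ▸ hF y⟩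

theorem IsProperOnDistinctTriples.isCollapsing [Infinite M]
    (hG : IsProperOnDistinctTriples G M) (hk : Tendsto k 𝒰 cofinite) {c e c' e' : M}
    (hc : ∀ y, y ≠ e → Tendsto (fun j => k j • y) 𝒰 (𝓝 c))
    (hc' : ∀ y, y ≠ e' → Tendsto (fun j => (k j)⁻¹ • y) 𝒰 (𝓝 c')) :
    IsCollapsing 𝒰 k c c' := by
  classical
  intro y w hw hy
  obtain ⟨c₀, hc₀⟩ := 𝒰.exists_tendsto_of_compactSpace fun j => k j • y j
  suffices c₀ = c from this ▸ hc₀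
  by_contra hc₀c
  obtain ⟨T, hT⟩ := Infinite.exists_notMem_finset {e', c₀, c}
  obtain ⟨d, hd⟩ := Infinite.exists_notMem_finset {e, w, c'}
  simp only [Finset.mem_insert, Finset.mem_singleton, not_or] at hT hd
  refine hG.not_tendsto_smul hk (t := fun j => (y j, (k j)⁻¹ • T, d)) (σ := (c₀, T, c))
    ⟨hw, Ne.symm hd.2.1, Ne.symm hd.2.2⟩ ⟨Ne.symm hT.2.1, hc₀c, hT.2.2⟩
    (hy.prodMk_nhds ((hc' T hT.1).prodMk_nhds tendsto_const_nhds)) ?_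
  simp only [Prod.smul_mk, smul_inv_smul]
  exact hc₀.prodMk_nhds (tendsto_const_nhds.prodMk_nhds (hc d hd.1))

theorem IsProperOnDistinctTriples.exists_isCollapsing [Infinite M]
    (hG : IsProperOnDistinctTriples G M) (hk : Tendsto k 𝒰 cofinite) :
    ∃ u v : M, IsCollapsing 𝒰 k u v ∧ IsCollapsing 𝒰 (fun j => (k j)⁻¹) v u := by
  have hk' : Tendsto (fun j => (k j)⁻¹) 𝒰 cofinite := inv_injective.tendsto_cofinite.comp hk
  obtain ⟨c, e, hc⟩ := hG.exists_tendsto_smul_of_ne hk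
  obtain ⟨c', e', hc'⟩ := hG.exists_tendsto_smul_of_ne hk'
  refine ⟨c, c', hG.isCollapsing hk hc hc', hG.isCollapsing hk' (e' := e) hc' ?_⟩
  simpa only [inv_inv] using hc

end ConvergenceProperty

theorem IsCollapsing.eventually_mapsTo [CompactSpace M] {𝒰 : Ultrafilter ι} {k : ι → G}
    {u v : M} (h : IsCollapsing 𝒰 k u v) {U V : Set M} (hU : IsOpen U) (hu : u ∈ U)
    (hV : IsOpen V) (hv : v ∈ V) : ∀ᶠ j in 𝒰, MapsTo (fun x => k j • x) Vᶜ U := by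
  by_contra hne
  rw [← Ultrafilter.eventually_not] at hne
  obtain ⟨y, hy⟩ := (hne.mono fun j hj => by
    simpa only [MapsTo, not_forall, exists_prop] using hj).choice
  obtain ⟨w, hw⟩ := 𝒰.exists_tendsto_of_compactSpace y
  have hwV : w ∈ Vᶜ := hV.isClosed_compl.mem_of_tendsto hw (hy.mono fun j hj => hj.1)
  have hkyU := h y w (fun hwv => hwV (hwv ▸ hv)) hw (hU.mem_nhds hu)
  obtain ⟨j, hj, hjU⟩ := (hy.and hkyU).exists
  exact hj.2 hjU

theorem IsCollapsing.ne_of_tendsto [T2Space M] {l : Filter ι} [l.NeBot] {k : ι → G} {u v : M}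
    (h : IsCollapsing l k u v) {x y : ι → M} {a b : M} (hab : a ≠ b)
    (hx : Tendsto x l (𝓝 a)) (hkx : Tendsto (fun j => k j • x j) l (𝓝 a))
    (hy : Tendsto y l (𝓝 b)) (hky : Tendsto (fun j => k j • y j) l (𝓝 b)) : u ≠ v := by
  rintro rfl
  have hfix : ∀ {z : ι → M} {c : M}, Tendsto z l (𝓝 c) →
      Tendsto (fun j => k j • z j) l (𝓝 c) → c = u := fun hz hkz =>
    by_contra fun hc => hc (tendsto_nhds_unique hkz (h _ _ hc hz))
  exact hab ((hfix hx hkx).trans (hfix hy hky).symm)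

theorem IsCollapsing.mem_closure_of_mapsTo {𝒱 : Ultrafilter ℕ} (h𝒱 : (𝒱 : Filter ℕ) ≤ atTop)
    {κ : G} {c d : M} (h : IsCollapsing 𝒱 (κ ^ ·) c d) {U V : Set M} (hUV : Disjoint U V)
    (hκ : MapsTo (fun x => κ • x) Vᶜ U) {w₁ w₂ : M} (hw : w₁ ≠ w₂) (hw₁ : w₁ ∉ V)
    (hw₂ : w₂ ∉ V) : c ∈ closure U := by
  obtain ⟨w, hwV, hwd⟩ : ∃ w, w ∉ V ∧ w ≠ d := by
    rcases eq_or_ne w₁ d with rfl | h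
    exacts [⟨w₂, hw₂, hw.symm⟩, ⟨w₁, hw₁, h⟩]
  refine mem_closure_of_tendsto (h _ w hwd tendsto_const_nhds) ?_
  filter_upwards [h𝒱 (eventually_ge_atTop 1)] with n hn
  obtain ⟨m, rfl⟩ := Nat.exists_eq_add_of_le' hn
  exact mapsTo_pow_succ_smul hUV hκ m hwV

theorem smul_eq_of_isCollapsing_pow [T2Space M] [Infinite M] {𝒱 : Ultrafilter ℕ} {κ : G}
    (hκ : Continuous fun x : M => κ • x) {c d : M} (h : IsCollapsing 𝒱 (κ ^ ·) c d) :
    κ • c = c := by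
  classical
  obtain ⟨y, hy⟩ := Infinite.exists_notMem_finset {d, κ⁻¹ • d}
  simp only [Finset.mem_insert, Finset.mem_singleton, not_or] at hy
  have hcomm : ∀ n : ℕ, κ • κ ^ n • y = κ ^ n • κ • y := fun n => by
    rw [smul_smul, smul_smul, (Commute.self_pow κ n).eq]
  have h₁ := (hκ.tendsto c).comp (h _ y hy.1 tendsto_const_nhds)
  have h₂ := h _ (κ • y) (fun h' => hy.2 (eq_inv_smul_iff.2 h')) tendsto_const_nhds
  simp only [Function.comp_def, hcomm] at h₁
  exact tendsto_nhds_unique h₁ h₂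

theorem fixedPoints_eq_of_isCollapsing_pow [T2Space M] [Infinite M] {𝒱 : Ultrafilter ℕ}
    {κ : G} (hcont : ∀ g : G, Continuous fun x : M => g • x) {c d : M}
    (hcd : IsCollapsing 𝒱 (κ ^ ·) c d) (hdc : IsCollapsing 𝒱 (κ⁻¹ ^ ·) d c) :
    {x : M | κ • x = x} = {c, d} := by
  ext x
  refine ⟨fun hx => ?_, ?_⟩
  · have hpow : ∀ n : ℕ, κ ^ n • x = x := fun n => (MulAction.stabilizer G x).pow_mem hx n
    refine (eq_or_ne x d).elim Or.inr fun hxd => Or.inl ?_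
    have := hcd _ x hxd tendsto_const_nhds
    simp only [hpow] at this
    exact tendsto_nhds_unique tendsto_const_nhds this
  · rintro (rfl | rfl)
    · exact smul_eq_of_isCollapsing_pow (hcont κ) hcd
    · exact (inv_smul_eq_iff.1 (smul_eq_of_isCollapsing_pow (hcont κ⁻¹) hdc)).symm

theorem isLoxodromic_of_mapsTo [CompactSpace M] [T2Space M] [Infinite M]
    (hG : IsConvergenceAction G M) {κ : G} {U V : Set M} {x₀ : M}
    (hUV : Disjoint (closure U) (closure V)) (hU : U.Nonempty) (hV : V.Nonempty)
    (hx₀ : x₀ ∉ U ∪ V) (hκ : MapsTo (fun x => κ • x) Vᶜ U)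
    (hκ' : MapsTo (fun x => κ⁻¹ • x) Uᶜ V) : IsLoxodromic G M κ := by
  have hUV' : Disjoint U V := hUV.mono subset_closure subset_closure
  rw [mem_union, not_or] at hx₀
  have hord : ¬ IsOfFinOrder κ := by
    rw [isOfFinOrder_iff_pow_eq_one]
    rintro ⟨_ | n, hn, hκn⟩
    · exact hn.false
    · exact hx₀.1 (by simpa [hκn] using mapsTo_pow_succ_smul hUV' hκ n hx₀.2)
  let 𝒱 := Ultrafilter.of (atTop : Filter ℕ)
  have h𝒱 : (𝒱 : Filter ℕ) ≤ atTop := Ultrafilter.of_le atTop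
  have hk : Tendsto (κ ^ ·) 𝒱 cofinite :=
    (injective_pow_iff_not_isOfFinOrder.2 hord).tendsto_cofinite.comp
      (Nat.cofinite_eq_atTop ▸ h𝒱)
  obtain ⟨c, d, hcd, hdc⟩ := hG.isProperOnDistinctTriples.exists_isCollapsing hk
  simp only [← inv_pow] at hdc
  obtain ⟨p, hp⟩ := hU
  obtain ⟨q, hq⟩ := hV
  have hc : c ∈ closure U := hcd.mem_closure_of_mapsTo h𝒱 hUV' hκ
    (ne_of_mem_of_not_mem hp hx₀.1) (hUV'.notMem_of_mem_left hp) hx₀.2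
  have hd : d ∈ closure V := hdc.mem_closure_of_mapsTo h𝒱 hUV'.symm hκ'
    (ne_of_mem_of_not_mem hq hx₀.2) (hUV'.notMem_of_mem_right hq) hx₀.1
  refine ⟨hord, ?_⟩
  rw [fixedPoints_eq_of_isCollapsing_pow hG.1 hcd hdc, encard_pair (hUV.ne_of_mem hc hd)]

theorem IsCollapsing.eventually_isLoxodromic [CompactSpace M] [T2Space M] [Infinite M]
    (hG : IsConvergenceAction G M) {𝒰 : Ultrafilter ι} {k : ι → G} {u v : M}
    (h : IsCollapsing 𝒰 k u v) (h' : IsCollapsing 𝒰 (fun j => (k j)⁻¹) v u) (huv : u ≠ v) :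
    ∀ᶠ j in 𝒰, IsLoxodromic G M (k j) := by
  classical
  obtain ⟨x₀, hx₀⟩ := Infinite.exists_notMem_finset {u, v}
  simp only [Finset.mem_insert, Finset.mem_singleton, not_or] at hx₀
  obtain ⟨U, hu, hU, V, hv, hV, hUV⟩ := exists_open_nhds_disjoint_closure huv
  have hu' : u ∈ U \ {x₀} := ⟨hu, fun h => hx₀.1 h.symm⟩
  have hv' : v ∈ V \ {x₀} := ⟨hv, fun h => hx₀.2 h.symm⟩
  filter_upwards [h.eventually_mapsTo (hU.sdiff isClosed_singleton) hu'
      (hV.sdiff isClosed_singleton) hv',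
    h'.eventually_mapsTo (hV.sdiff isClosed_singleton) hv' (hU.sdiff isClosed_singleton) hu']
    with j hj hj'
  exact isLoxodromic_of_mapsTo hG
    (hUV.mono (closure_mono sdiff_subset) (closure_mono sdiff_subset)) ⟨u, hu'⟩ ⟨v, hv'⟩
    (x₀ := x₀) (by simp) hj hj'

theorem exists_ultrafilter_tendsto_cofinite {α β X : Type*} {s : Set α} (hs : s.Infinite)
    {F : Filter ι} [F.NeBot] {L : Filter X} {x : α → ι → X} (hx : ∀ r ∈ s, Tendsto (x r) F L)
    {f : ι → α → β} (hf : ∀ i, Function.Injective (f i)) :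
    ∃ 𝒰 : Ultrafilter (α × ι), (∀ᶠ p : α × ι in 𝒰, p.1 ∈ s) ∧
      Tendsto (Prod.snd : α × ι → ι) 𝒰 F ∧ Tendsto (fun p : α × ι => x p.1 p.2) 𝒰 L ∧
      Tendsto (fun p : α × ι => f p.2 p.1) 𝒰 cofinite := by
  classical
  let e : α × ι → ι × X × β := fun p => (p.2, x p.1 p.2, f p.2 p.1)
  let l := comap e (F ×ˢ L ×ˢ cofinite) ⊓ 𝓟 {p | p.1 ∈ s}
  -- pigeonhole: `#S + 1` elements of `s` cannot all be sent into the finite set `S` by `f i`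
  have : l.NeBot := by
    refine inf_principal_neBot_iff.2 fun t ht => ?_
    obtain ⟨t', ht', hsub⟩ := mem_comap.1 ht
    obtain ⟨A, hA, B, hB, hAB⟩ := mem_prod_iff.1 ht'
    obtain ⟨W, hW, C, hC, hWC⟩ := mem_prod_iff.1 hB
    set S := (mem_cofinite.1 hC).toFinset
    obtain ⟨T, hTs, hTcard⟩ := hs.exists_subset_card_eq (S.card + 1)
    obtain ⟨i, hiA, hiW⟩ := ((eventually_mem_set.2 hA).and
      (T.eventually_all.2 fun r hr => (hx r (hTs hr)).eventually_mem hW)).exists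
    obtain ⟨r, hrT, hrC⟩ : ∃ r ∈ T, f i r ∈ C := by
      by_contra! hT
      have := Finset.card_le_card_of_injOn (f i) (t := S)
        (fun r hr => by simpa [S] using hT r hr) (hf i).injOn
      omega
    exact ⟨(r, i), hsub (hAB ⟨hiA, hWC ⟨hiW r hrT, hrC⟩⟩), hTs hrT⟩
  have he : Tendsto e (Ultrafilter.of l) (F ×ˢ L ×ˢ cofinite) :=
    tendsto_comap.mono_left ((Ultrafilter.of_le l).trans inf_le_left)
  refine ⟨Ultrafilter.of l, (Ultrafilter.of_le l).trans inf_le_right (mem_principal_self _),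
    tendsto_fst.comp he, tendsto_fst.comp (tendsto_snd.comp he),
    tendsto_snd.comp (tendsto_snd.comp he)⟩

theorem not_isConicalLimitPoint_of_finite [Finite M] [T1Space M]
    (h3 : ∃ a b c : M, a ≠ b ∧ a ≠ c ∧ b ≠ c) (H : Subgroup G) (z : M) :
    ¬ IsConicalLimitPoint G M H z := by
  rintro ⟨g, -, b, -, -, -, hb⟩
  obtain ⟨q, q', hqq', hq, hq'⟩ : ∃ q q' : M, q ≠ q' ∧ q ≠ z ∧ q' ≠ z := by
    obtain ⟨x, y, w, hxy, hxw, hyw⟩ := h3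
    rcases eq_or_ne x z with rfl | hx
    · exact ⟨y, w, hyw, hxy.symm, hxw.symm⟩
    rcases eq_or_ne y z with rfl | hy
    exacts [⟨x, w, hxw, hx, hyw.symm⟩, ⟨x, y, hxy, hx, hy⟩]
  have hbq := hb q hq
  have hbq' := hb q' hq'
  rw [nhds_discrete, tendsto_pure] at hbq hbq'
  obtain ⟨n, hn, hn'⟩ := (hbq.and hbq').exists
  exact hqq' (smul_left_cancel _ (hn.trans hn'.symm))

theorem IsConicalLimitPoint.exists_isLoxodromic [CompactSpace M] [T2Space M] [Infinite M]
    (hG : IsConvergenceAction G M) {H : Subgroup G} {z : M} (hz : IsConicalLimitPoint G M H z)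
    {P : Set G} (hP : P.Infinite) (hfix : ∀ r ∈ P, r • z = z) : ∃ r ∈ P, IsLoxodromic G M r := by
  obtain ⟨g, a, b, -, hab, hza, hqb⟩ := hz
  obtain ⟨w, hw⟩ := exists_ne z
  have hsteer : ∀ r ∈ P, Tendsto (fun n => g n • r • w) atTop (𝓝 b) := fun r hr =>
    hqb _ fun h => hw (smul_left_cancel r (h.trans (hfix r hr).symm))
  obtain ⟨𝒰, hP𝒰, hn, hb, hk⟩ := exists_ultrafilter_tendsto_cofinite hP hsteer
    (f := fun n r => g n * r * (g n)⁻¹) fun n => (MulAut.conj (g n)).injective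
  set k : G × ℕ → G := fun p => g p.2 * p.1 * (g p.2)⁻¹
  have hconj : ∀ (p : G × ℕ) (x : M), k p • g p.2 • x = g p.2 • p.1 • x := fun p x => by
    simp only [k, mul_smul, inv_smul_smul]
  obtain ⟨u, v, huv, hvu⟩ := hG.isProperOnDistinctTriples.exists_isCollapsing hk
  have hne : u ≠ v := huv.ne_of_tendsto hab (hza.comp hn)
    ((hza.comp hn).congr' (hP𝒰.mono fun p hp => by simp [hconj, hfix _ hp]))
    ((hqb w hw).comp hn) (by simpa only [Function.comp_def, hconj] using hb)
  obtain ⟨p, hp, hlox⟩ := (hP𝒰.and (huv.eventually_isLoxodromic hG hvu hne)).exists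
  exact ⟨p.1, hp, hlox.of_conj⟩

end ConicalLimitPoints

/-- in a convergence group, a conical limit point of `G` cannot be a
parabolic point, i.e. it is not fixed by any parabolic subgroup of `G`. -/
theorem conical_limit_point_not_parabolic
    {G M : Type*} [Group G] [TopologicalSpace M] [CompactSpace M]
    [TopologicalSpace.MetrizableSpace M] [MulAction G M]
    (hconv : IsConvergenceAction G M)
    (h3 : ∃ a b c : M, a ≠ b ∧ a ≠ c ∧ b ≠ c) :
    ∀ z : M, IsConicalLimitPoint G M ⊤ z →
      ¬ ∃ P : Subgroup G, (P : Set G).Infinite ∧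
          (∀ g ∈ P, ¬ IsLoxodromic G M g) ∧
          ∀ g ∈ P, g • z = z := by
  rintro z hz ⟨P, hPinf, hPnl, hPfix⟩
  cases finite_or_infinite M
  · exact not_isConicalLimitPoint_of_finite h3 ⊤ z hz
  · obtain ⟨r, hr, hlox⟩ := hz.exists_isLoxodromic hconv hPinf hPfix
    exact hPnl r hr hlox
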